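/- arXiv:math/0211082 — 2 statements merged into one kernel-verified Lean document; each statement's English description precedes it below -/
import Mathlib

section
/- On ℂⁿ⊗ℂⁿ⊗ℂⁿ one has Q₂₃ Ř₁₂ Q₂₃ = qⁿ · Q₂₃, where Q = Σ_{i,j} q^{n−2i+1} E_ij⊗E_ij and Ř = PR. -/
open Matrix Kronecker BigOperators

noncomputable section

/-- Standard matrix units `E i j` in `End(ℂⁿ)`. -/
def E (n : ℕ) (i j : Fin n) : Matrix (Fin n) (Fin n) ℂ :=
  Matrix.single i j 1

/-- The R-matrix `R = q Σ Eii⊗Eii + Σ_{i≠j} Eii⊗Ejj + (q-q⁻¹) Σ_{i<j} Eij⊗Eji`. -/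
def Rm (n : ℕ) (q : ℂ) : Matrix (Fin n × Fin n) (Fin n × Fin n) ℂ :=
  q • (∑ i, E n i i ⊗ₖ E n i i)
    + ∑ i, ∑ j, (if i ≠ j then E n i i ⊗ₖ E n j j else 0)
    + (q - q⁻¹) • ∑ i, ∑ j, (if i < j then E n i j ⊗ₖ E n j i else 0)

/-- The R-matrix `R̃`. -/
def Rt (n : ℕ) (q : ℂ) : Matrix (Fin n × Fin n) (Fin n × Fin n) ℂ :=
  q⁻¹ • (∑ i, E n i i ⊗ₖ E n i i)
    + ∑ i, ∑ j, (if i ≠ j then E n i i ⊗ₖ E n j j else 0)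
    + (q⁻¹ - q) • ∑ i, ∑ j, (if j < i then E n i j ⊗ₖ E n j i else 0)

/-- The permutation operator `P = Σ Eij⊗Eji`. -/
def Pm (n : ℕ) : Matrix (Fin n × Fin n) (Fin n × Fin n) ℂ :=
  ∑ i, ∑ j, E n i j ⊗ₖ E n j i

/-- `Ř = P R`. -/
def Rc (n : ℕ) (q : ℂ) : Matrix (Fin n × Fin n) (Fin n × Fin n) ℂ :=
  Pm n * Rm n q

/-- `Q = Σ_{i,j} q^{n-2i+1} Eij⊗Eij` (indices `i,j ∈ {1,…,n}`). -/
def Qm (n : ℕ) (q : ℂ) : Matrix (Fin n × Fin n) (Fin n × Fin n) ℂ :=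
  ∑ i : Fin n, ∑ j : Fin n,
    (q ^ ((n : ℤ) - 2 * (((i : ℕ) : ℤ) + 1) + 1)) • (E n i j ⊗ₖ E n i j)

/-- `Q̄ = Σ_{i,j} Eij⊗Eij`. -/
def Qb (n : ℕ) : Matrix (Fin n × Fin n) (Fin n × Fin n) ℂ :=
  ∑ i, ∑ j, E n i j ⊗ₖ E n i j

/-- Partial transpose in the first tensor factor: `'X`. -/
def pT (n : ℕ) (X : Matrix (Fin n × Fin n) (Fin n × Fin n) ℂ) :
    Matrix (Fin n × Fin n) (Fin n × Fin n) ℂ :=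
  Matrix.of fun p r => X (r.1, p.2) (p.1, r.2)

/-- Partial transpose in the second tensor factor: `X′`. -/
def sT (n : ℕ) (X : Matrix (Fin n × Fin n) (Fin n × Fin n) ℂ) :
    Matrix (Fin n × Fin n) (Fin n × Fin n) ℂ :=
  Matrix.of fun p r => X (p.1, r.2) (r.1, p.2)

/-- Embedding of an operator on `ℂⁿ⊗ℂⁿ` acting in factors 1,2 of a triple tensor product. -/
def L12 (n : ℕ) (X : Matrix (Fin n × Fin n) (Fin n × Fin n) ℂ) :
    Matrix (Fin n × Fin n × Fin n) (Fin n × Fin n × Fin n) ℂ :=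
  Matrix.of fun p r => X (p.1, p.2.1) (r.1, r.2.1) * (if p.2.2 = r.2.2 then 1 else 0)

/-- Acting in factors 1,3. -/
def L13 (n : ℕ) (X : Matrix (Fin n × Fin n) (Fin n × Fin n) ℂ) :
    Matrix (Fin n × Fin n × Fin n) (Fin n × Fin n × Fin n) ℂ :=
  Matrix.of fun p r => X (p.1, p.2.2) (r.1, r.2.2) * (if p.2.1 = r.2.1 then 1 else 0)

/-- Acting in factors 2,3. -/
def L23 (n : ℕ) (X : Matrix (Fin n × Fin n) (Fin n × Fin n) ℂ) :
    Matrix (Fin n × Fin n × Fin n) (Fin n × Fin n × Fin n) ℂ :=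
  Matrix.of fun p r => X p.2 r.2 * (if p.1 = r.1 then 1 else 0)

section Aux

lemma mySumCollapse {n : ℕ} (f : Fin n → ℂ) (a : Fin n) (hf : ∀ x, x ≠ a → f x = 0) :
    ∑ x, f x = f a :=
  Finset.sum_eq_single_of_mem a (Finset.mem_univ a) (fun x _ hx => hf x hx)

lemma E_apply {n : ℕ} (i j a b : Fin n) :
    E n i j a b = if i = a ∧ j = b then 1 else 0 := by
  simp [E, Matrix.single]

lemma Pm_apply (n : ℕ) (a b c d : Fin n) :
    Pm n (a,b) (c,d) = if a=d ∧ b=c then 1 else 0 := by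
  simp only [Pm, Matrix.sum_apply, Matrix.kroneckerMap_apply]
  rw [mySumCollapse _ a (fun x hx => ?_)]
  · rw [mySumCollapse _ b (fun y hy => ?_)]
    · simp only [E_apply, ite_and, mul_ite, mul_one, mul_zero, ite_mul, zero_mul, one_mul]
      split_ifs <;> first | rfl | grind
    · simp only [E_apply, ite_and, mul_ite, mul_one, mul_zero, ite_mul, zero_mul, one_mul]
      split_ifs <;> first | rfl | grind
  · refine Finset.sum_eq_zero fun y _ => ?_
    simp only [E_apply, ite_and, mul_ite, mul_one, mul_zero, ite_mul, zero_mul, one_mul]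
    split_ifs <;> first | rfl | grind

lemma Rm_apply (n : ℕ) (q : ℂ) (a b c d : Fin n) :
    Rm n q (a,b) (c,d) = (if a=b ∧ b=c ∧ c=d then q else 0)
      + (if a=c ∧ b=d ∧ a≠b then 1 else 0)
      + (if b=c ∧ d=a ∧ a<c then q - q⁻¹ else 0) := by
  have h1 : (∑ i, E n i i ⊗ₖ E n i i) (a,b) (c,d)
      = if a=b ∧ b=c ∧ c=d then 1 else 0 := by
    rw [Matrix.sum_apply]
    simp only [Matrix.kroneckerMap_apply]
    rw [mySumCollapse _ a (fun x hx => ?_)]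
    · simp only [E_apply, ite_and, mul_ite, mul_one, mul_zero, ite_mul, zero_mul, one_mul]
      split_ifs <;> first | rfl | grind
    · simp only [E_apply, ite_and, mul_ite, mul_one, mul_zero, ite_mul, zero_mul, one_mul]
      split_ifs <;> first | rfl | grind
  have h2 : (∑ i, ∑ j, (if i ≠ j then E n i i ⊗ₖ E n j j else 0)) (a,b) (c,d)
      = if a=c ∧ b=d ∧ a≠b then 1 else 0 := by
    simp only [Matrix.sum_apply]
    rw [mySumCollapse _ a (fun x hx => ?_)]
    · rw [mySumCollapse _ b (fun y hy => ?_)]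
      · by_cases hab : a = b <;>
          simp only [hab, ne_eq, not_true_eq_false, not_false_eq_true, if_true, if_false,
            Matrix.zero_apply, Matrix.kroneckerMap_apply, E_apply, ite_and, mul_ite, mul_one,
            mul_zero, ite_mul, zero_mul, one_mul] <;>
          split_ifs <;> first | rfl | grind
      · by_cases hay : a = y <;>
          simp only [hay, ne_eq, not_true_eq_false, not_false_eq_true, if_true, if_false,
            Matrix.zero_apply, Matrix.kroneckerMap_apply, E_apply, ite_and, mul_ite, mul_one,
            mul_zero, ite_mul, zero_mul, one_mul] <;>
          split_ifs <;> first | rfl | grind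
    · refine Finset.sum_eq_zero fun y _ => ?_
      by_cases hxy : x = y <;>
        simp only [hxy, ne_eq, not_true_eq_false, not_false_eq_true, if_true, if_false,
          Matrix.zero_apply, Matrix.kroneckerMap_apply, E_apply, ite_and, mul_ite, mul_one,
          mul_zero, ite_mul, zero_mul, one_mul] <;>
        split_ifs <;> first | rfl | grind
  have h3 : (∑ i, ∑ j, (if i < j then E n i j ⊗ₖ E n j i else 0)) (a,b) (c,d)
      = if b=c ∧ d=a ∧ a<c then 1 else 0 := by
    simp only [Matrix.sum_apply]
    rw [mySumCollapse _ a (fun x hx => ?_)]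
    · rw [mySumCollapse _ b (fun y hy => ?_)]
      · by_cases hab : a < b <;>
          simp only [hab, if_true, if_false,
            Matrix.zero_apply, Matrix.kroneckerMap_apply, E_apply, ite_and, mul_ite, mul_one,
            mul_zero, ite_mul, zero_mul, one_mul] <;>
          split_ifs <;> first | rfl | grind
      · by_cases hay : a < y <;>
          simp only [hay, if_true, if_false,
            Matrix.zero_apply, Matrix.kroneckerMap_apply, E_apply, ite_and, mul_ite, mul_one,
            mul_zero, ite_mul, zero_mul, one_mul] <;>
          split_ifs <;> first | rfl | grind
    · refine Finset.sum_eq_zero fun y _ => ?_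
      by_cases hxy : x < y <;>
        simp only [hxy, if_true, if_false,
          Matrix.zero_apply, Matrix.kroneckerMap_apply, E_apply, ite_and, mul_ite, mul_one,
          mul_zero, ite_mul, zero_mul, one_mul] <;>
        split_ifs <;> first | rfl | grind
  simp only [Rm, Matrix.add_apply, Matrix.smul_apply, smul_eq_mul, h1, h2, h3]
  split_ifs <;> ring

lemma Rc_apply (n : ℕ) (q : ℂ) (a b c d : Fin n) :
    Rc n q (a,b) (c,d) = (if b=a ∧ a=c ∧ c=d then q else 0)
      + (if b=c ∧ a=d ∧ b≠a then 1 else 0)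
      + (if a=c ∧ d=b ∧ b<a then q - q⁻¹ else 0) := by
  have key : Rc n q (a,b) (c,d) = Rm n q (b,a) (c,d) := by
    rw [Rc, Matrix.mul_apply, Fintype.sum_prod_type]
    rw [mySumCollapse _ b (fun x hx => ?_)]
    · rw [mySumCollapse _ a (fun y hy => ?_)]
      · rw [Pm_apply]; simp
      · simp only [Pm_apply, ite_mul, zero_mul, one_mul]
        split_ifs <;> first | rfl | grind
    · refine Finset.sum_eq_zero fun y _ => ?_
      simp only [Pm_apply, ite_mul, zero_mul, one_mul]
      split_ifs <;> first | rfl | grind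
  rw [key, Rm_apply]
  have h3 : (a = c ∧ d = b ∧ b < c) = (a = c ∧ d = b ∧ b < a) := by
    apply propext; constructor <;> rintro ⟨h1, h2, h4⟩ <;> exact ⟨h1, h2, by grind⟩
  simp only [h3]

lemma Qm_apply (n : ℕ) (q : ℂ) (a b c d : Fin n) :
    Qm n q (a,b) (c,d) = if a = b ∧ c = d then q ^ ((n:ℤ) - 2*((a:ℕ):ℤ) - 1) else 0 := by
  simp only [Qm, Matrix.sum_apply, Matrix.smul_apply, Matrix.kroneckerMap_apply, E,
    Matrix.single, Matrix.of_apply, smul_eq_mul]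
  simp only [mul_ite, mul_one, mul_zero, ite_and]
  rw [Finset.sum_comm]
  simp only [Finset.sum_ite_eq, Finset.sum_ite_eq', Finset.mem_univ, if_true]
  by_cases h1 : a = b <;> by_cases h2 : c = d <;>
    simp [h1, h2, eq_comm]
  · congr 1; ring

lemma tele (q : ℂ) (hq : q ≠ 0) (N : ℤ) : ∀ m : ℕ,
    (q - q⁻¹) * ∑ s ∈ Finset.range m, q ^ (N - 2*(s:ℤ) - 1) = q ^ N - q ^ (N - 2*(m:ℤ))
  | 0 => by simp
  | (m+1) => by
    rw [Finset.sum_range_succ, mul_add, tele q hq N m]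
    have e1 : q * q ^ (N - 2*(m:ℤ) - 1) = q ^ (N - 2*(m:ℤ)) := by
      rw [← zpow_one_add₀ hq]; congr 1; ring
    have e2 : q⁻¹ * q ^ (N - 2*(m:ℤ) - 1) = q ^ (N - 2*((m:ℤ)+1)) := by
      rw [← _root_.zpow_neg_one, ← zpow_add₀ hq]; congr 1; ring
    rw [sub_mul, e1, e2]
    push_cast
    ring

lemma fin_lt_sum {n : ℕ} (p : Fin n) (g : ℕ → ℂ) :
    ∑ s : Fin n, (if s < p then g (s:ℕ) else 0) = ∑ s ∈ Finset.range (p:ℕ), g s := by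
  simp only [Fin.lt_def]
  rw [Fin.sum_univ_eq_sum_range (fun m => if m < (p:ℕ) then g m else 0) n]
  rw [← Finset.sum_filter]
  congr 1
  ext m
  simp only [Finset.mem_filter, Finset.mem_range]
  constructor
  · rintro ⟨_, h⟩; exact h
  · intro h; exact ⟨lt_of_lt_of_le h p.isLt.le, h⟩

set_option maxHeartbeats 800000 in
lemma key_sum (n : ℕ) (q : ℂ) (hq : q ≠ 0) (p r : Fin n) :
    ∑ s : Fin n, Rc n q (p, s) (r, s) * q ^ ((n:ℤ) - 2*((s:ℕ):ℤ) - 1)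
      = if p = r then q ^ (n:ℤ) else 0 := by
  by_cases hpr : p = r
  · subst hpr
    have hRc : ∀ s : Fin n, Rc n q (p, s) (p, s)
        = (if s = p then q else 0) + (if s < p then q - q⁻¹ else 0) := by
      intro s
      rw [Rc_apply]
      split_ifs <;> first | (exfalso; tauto) | ring1
    simp only [hRc, add_mul, Finset.sum_add_distrib, ite_mul, zero_mul]
    rw [Finset.sum_ite_eq' Finset.univ p (fun s => q * q ^ ((n:ℤ) - 2*((s:ℕ):ℤ) - 1))]
    have h2 : ∑ s : Fin n, (if s < p then (q - q⁻¹) * q ^ ((n:ℤ) - 2*((s:ℕ):ℤ) - 1) else 0)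
        = (q - q⁻¹) * ∑ s ∈ Finset.range (p:ℕ), q ^ ((n:ℤ) - 2*(s:ℤ) - 1) := by
      rw [Finset.mul_sum, ← fin_lt_sum p (fun m => (q - q⁻¹) * q ^ ((n:ℤ) - 2*(m:ℤ) - 1))]
    rw [h2, tele q hq ((n:ℤ))]
    have e1 : q * q ^ ((n:ℤ) - 2*((p:ℕ):ℤ) - 1) = q ^ ((n:ℤ) - 2*((p:ℕ):ℤ)) := by
      rw [← zpow_one_add₀ hq]; congr 1; ring
    simp only [Finset.mem_univ, if_true, if_pos rfl]
    rw [e1]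
    ring
  · simp only [if_neg hpr]
    refine Finset.sum_eq_zero fun s _ => ?_
    rw [Rc_apply]
    have : ((if s = p ∧ p = r ∧ r = s then q else 0)
        + (if s = r ∧ p = s ∧ s ≠ p then 1 else 0)
        + (if p = r ∧ s = s ∧ s < p then q - q⁻¹ else 0)) = 0 := by
      split_ifs <;> first | (exfalso; tauto) | ring1
    rw [this, zero_mul]

lemma L23Q_apply (n : ℕ) (q : ℂ) (p r : Fin n × Fin n × Fin n) :
    L23 n (Qm n q) p r = if p.2.1 = p.2.2 ∧ r.2.1 = r.2.2 ∧ p.1 = r.1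
      then q ^ ((n:ℤ) - 2*((p.2.1:ℕ):ℤ) - 1) else 0 := by
  obtain ⟨p1, p2, p3⟩ := p
  obtain ⟨r1, r2, r3⟩ := r
  simp only [L23, Matrix.of_apply]
  rw [Qm_apply]
  simp only [mul_ite, mul_one, mul_zero, ite_and]
  split_ifs <;> first | rfl | grind

set_option maxHeartbeats 800000 in
lemma AB_apply (n : ℕ) (q : ℂ) (p t : Fin n × Fin n × Fin n) :
    (L23 n (Qm n q) * L12 n (Rc n q)) p t
      = (if p.2.1 = p.2.2 then q ^ ((n:ℤ) - 2*((p.2.1:ℕ):ℤ) - 1) else 0)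
        * Rc n q (p.1, t.2.2) (t.1, t.2.1) := by
  obtain ⟨p1, p2, p3⟩ := p
  obtain ⟨t1, t2, t3⟩ := t
  rw [Matrix.mul_apply, Fintype.sum_prod_type]
  rw [mySumCollapse _ p1 (fun x hx => ?_)]
  · rw [Fintype.sum_prod_type]
    rw [mySumCollapse _ t3 (fun y hy => ?_)]
    · rw [mySumCollapse _ t3 (fun z hz => ?_)]
      · simp only [L23Q_apply, L12, Matrix.of_apply]
        by_cases h23 : p2 = p3 <;> simp [h23]
      · simp only [L23Q_apply, L12, Matrix.of_apply]
        rw [if_neg hz, mul_zero, mul_zero]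
    · refine Finset.sum_eq_zero fun z _ => ?_
      simp only [L23Q_apply, L12, Matrix.of_apply]
      by_cases hzt : z = t3
      · rw [if_neg (fun h => hy (h.2.1.trans hzt)), zero_mul]
      · rw [if_neg hzt, mul_zero, mul_zero]
  · refine Finset.sum_eq_zero fun s _ => ?_
    obtain ⟨y, z⟩ := s
    simp only [L23Q_apply, L12, Matrix.of_apply]
    rw [if_neg (fun h => hx h.2.2.symm), zero_mul]

end Aux

/-- `Q₂₃ Ř₁₂ Q₂₃ = qⁿ Q₂₃` on `ℂⁿ⊗ℂⁿ⊗ℂⁿ`. -/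
theorem QRQ (n : ℕ) (hn : 1 ≤ n) (q : ℂ) (hq : q ≠ 0) :
    L23 n (Qm n q) * L12 n (Rc n q) * L23 n (Qm n q)
      = (q ^ (n : ℤ)) • L23 n (Qm n q) := by
  ext p r
  obtain ⟨p1, p2, p3⟩ := p
  obtain ⟨r1, r2, r3⟩ := r
  rw [Matrix.mul_apply, Fintype.sum_prod_type, Matrix.smul_apply, smul_eq_mul, L23Q_apply]
  rw [mySumCollapse _ r1 (fun x hx => ?_)]
  · rw [Fintype.sum_prod_type]
    have hinner : ∀ t2 : Fin n,
        (∑ t3, (L23 n (Qm n q) * L12 n (Rc n q)) (p1,p2,p3) (r1,t2,t3)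
            * L23 n (Qm n q) (r1,t2,t3) (r1,r2,r3))
          = (if p2 = p3 then q ^ ((n:ℤ) - 2*((p2:ℕ):ℤ) - 1) else 0)
            * (Rc n q (p1,t2) (r1,t2)
            * (if r2 = r3 then q ^ ((n:ℤ) - 2*((t2:ℕ):ℤ) - 1) else 0)) := by
      intro t2
      rw [mySumCollapse _ t2 (fun z hz => ?_)]
      · rw [AB_apply, L23Q_apply]
        by_cases hr : r2 = r3 <;> simp [hr, mul_assoc]
      · rw [L23Q_apply, if_neg (fun h => hz (show t2 = z from h.1).symm), mul_zero]
    rw [Finset.sum_congr rfl (fun t2 _ => hinner t2)]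
    by_cases h23 : p2 = p3 <;> by_cases hr : r2 = r3 <;>
      simp only [h23, hr, if_true, if_false, true_and, false_and, and_false, if_neg,
        zero_mul, mul_zero, Finset.sum_const_zero, eq_self_iff_true]
    · rw [← Finset.mul_sum]
      have : (∑ t2 : Fin n, Rc n q (p1, t2) (r1, t2) * q ^ ((n:ℤ) - 2*((t2:ℕ):ℤ) - 1))
          = if p1 = r1 then q ^ (n:ℤ) else 0 := key_sum n q hq p1 r1
      rw [this]
      split_ifs <;> first | ring1 | grind | tauto
    all_goals simp
  · refine Finset.sum_eq_zero fun s _ => ?_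
    obtain ⟨t2, t3⟩ := s
    rw [L23Q_apply, if_neg (fun h => hx h.2.2), mul_zero]
end
end

section
/- In the new algebra B_l(z,q), define e_i inductively by e_i = σ_{i+1} σ_i e_{i+1} σ_i⁻¹ σ_{i+1}⁻¹ for i = l−2, …, 1. Then e_i σ_{i+1} e_i = z·e_i and σ_i e_i = e_i σ_i = q·e_i hold for all 1 ≤ i ≤ l−2 (in addition to i = l−1). -/
private lemma mulx {A : Type*} [Ring A] (g h : A) (hgh : g * h = 1) :
    ∀ x : A, g * (h * x) = x := fun x => by rw [← mul_assoc, hgh, one_mul]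

private lemma commx {A : Type*} [Ring A] (g s : A) (h : g * s = s * g) :
    ∀ x : A, g * (s * x) = s * (g * x) := fun x => by
  rw [← mul_assoc, h, mul_assoc]

private lemma inv_left {A : Type*} [Ring A] [Algebra ℂ A] (r : ℂ) (g : A)
    (h : g * g = r • g + 1) : g * (g - r • 1) = 1 := by
  rw [mul_sub, h, mul_smul_comm, mul_one, add_sub_cancel_left]

private lemma inv_right {A : Type*} [Ring A] [Algebra ℂ A] (r : ℂ) (g : A)
    (h : g * g = r • g + 1) : (g - r • 1) * g = 1 := by
  rw [sub_mul, h, smul_mul_assoc, one_mul, add_sub_cancel_left]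

private lemma comm_sub {A : Type*} [Ring A] [Algebra ℂ A] (r : ℂ) (g s : A)
    (h : g * s = s * g) : (g - r • 1) * s = s * (g - r • 1) := by
  rw [sub_mul, mul_sub, h, smul_mul_assoc, mul_smul_comm, one_mul, mul_one]

/-- in any unital associative ℂ-algebra with elements
`σ₁,…,σ_{l-1}, e_{l-1}` satisfying the defining relations of the new algebra
`B_l(z,q)` (so each `σ_i` is invertible with `σ_i⁻¹ = σ_i - (q - q⁻¹)`), if the
elements `e_i` for `i = l-2, …, 1` are defined inductively by
`e_i = σ_{i+1} σ_i e_{i+1} σ_i⁻¹ σ_{i+1}⁻¹`, then `e_i σ_{i+1} e_i = z e_i` and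
`σ_i e_i = e_i σ_i = q e_i` hold for all `1 ≤ i ≤ l-2`
(in addition to `i = l-1`). -/
theorem new_brauer_ei_relations (l : ℕ) (hl : 3 ≤ l) (q z : ℂ)
    (hq : q ≠ 0) (hz : z ≠ 0) (hq2 : q ^ 2 ≠ 1)
    (A : Type*) [Ring A] [Algebra ℂ A] (σ e : ℕ → A)
    (hσ2 : ∀ i, 1 ≤ i → i ≤ l - 1 →
      σ i * σ i = (q - q⁻¹) • σ i + 1)
    (hfarσσ : ∀ i j, 1 ≤ i → i ≤ l - 1 → 1 ≤ j → j ≤ l - 1 →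
      (i + 1 < j ∨ j + 1 < i) → σ i * σ j = σ j * σ i)
    (hbraid : ∀ i, 1 ≤ i → i ≤ l - 2 →
      σ i * σ (i + 1) * σ i = σ (i + 1) * σ i * σ (i + 1))
    (hek2 : e (l - 1) * e (l - 1) = ((z - z⁻¹) / (q - q⁻¹)) • e (l - 1))
    (hσkek : σ (l - 1) * e (l - 1) = q • e (l - 1))
    (hekσk : e (l - 1) * σ (l - 1) = q • e (l - 1))
    (hekσek : e (l - 1) * σ (l - 2) * e (l - 1) = z • e (l - 1))
    (hfarσek : ∀ i, 1 ≤ i → i ≤ l - 3 → σ i * e (l - 1) = e (l - 1) * σ i)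
    (hlast : ∀ τ τi : A,
      τ = σ (l - 2) * σ (l - 3) * σ (l - 1) * σ (l - 2) →
      τi = (σ (l - 2) - (q - q⁻¹) • 1) * (σ (l - 1) - (q - q⁻¹) • 1)
            * (σ (l - 3) - (q - q⁻¹) • 1) * (σ (l - 2) - (q - q⁻¹) • 1) →
      e (l - 1) * ((z * q) • τi + (z⁻¹ * q⁻¹) • τ) * e (l - 1)
          * (q • τi + q⁻¹ • τ)
        = (q • τi + q⁻¹ • τ) * e (l - 1)
          * ((z * q) • τi + (z⁻¹ * q⁻¹) • τ) * e (l - 1))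
    (hind : ∀ i, 1 ≤ i → i ≤ l - 2 →
      e i = σ (i + 1) * σ i * e (i + 1) * (σ i - (q - q⁻¹) • 1)
            * (σ (i + 1) - (q - q⁻¹) • 1)) :
    ∀ i, 1 ≤ i → i ≤ l - 2 →
      e i * σ (i + 1) * e i = z • e i ∧
      σ i * e i = q • e i ∧ e i * σ i = q • e i := by
  suffices key : ∀ d i, i + d = l - 1 → 1 ≤ i →
      (σ i * e i = q • e i) ∧ (e i * σ i = q • e i) ∧
      (2 ≤ i → e i * σ (i - 1) * e i = z • e i) ∧
      (∀ j, 1 ≤ j → j + 2 ≤ i → σ j * e i = e i * σ j) ∧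
      (i ≤ l - 2 → e i * σ (i + 1) * e i = z • e i) by
    intro i h1 h2
    obtain ⟨ha, hb, _, _, he⟩ := key (l - 1 - i) i (by omega) h1
    exact ⟨he h2, ha, hb⟩
  intro d
  induction d with
  | zero =>
    intro i hi h1
    obtain rfl : i = l - 1 := by omega
    refine ⟨hσkek, hekσk, ?_, ?_, ?_⟩
    · intro _
      rw [show l - 1 - 1 = l - 2 from by omega]
      exact hekσek
    · intro j hj1 hj2
      exact hfarσek j hj1 (by omega)
    · intro h
      exact absurd h (by omega)
  | succ d ih =>
    intro i hi h1
    have hile : i ≤ l - 2 := by omega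
    obtain ⟨ha', hb', hc', hd', _⟩ := ih (i + 1) (by omega) (by omega)
    simp only [Nat.add_sub_cancel] at hc'
    have hcE := hc' (by omega)
    have hdef := hind i h1 hile
    set a := σ i with hA
    set b := σ (i + 1) with hB
    set E := e (i + 1) with hEdef
    set ai := a - (q - q⁻¹) • (1 : A) with hAI
    set bi := b - (q - q⁻¹) • (1 : A) with hBI
    simp only [mul_assoc] at hdef
    -- hdef : e i = b * (a * (E * (ai * bi)))
    have hqa := hσ2 i h1 (by omega)
    have hqb := hσ2 (i + 1) (by omega) (by omega)
    have hbbi : b * bi = 1 := inv_left _ _ hqb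
    have haaix := mulx a ai (inv_left _ _ hqa)
    have haiax := mulx ai a (inv_right _ _ hqa)
    have hbbix := mulx b bi hbbi
    have hbibx := mulx bi b (inv_right _ _ hqb)
    have hbr := hbraid i h1 hile
    have braidx : ∀ x : A, a * (b * (a * x)) = b * (a * (b * x)) := fun x => by
      calc a * (b * (a * x)) = (a * b * a) * x := by simp only [mul_assoc]
        _ = (b * a * b) * x := by rw [hbr]
        _ = b * (a * (b * x)) := by simp only [mul_assoc]
    have hbEx : ∀ x : A, b * (E * x) = q • (E * x) := fun x => by
      rw [← mul_assoc, ha', smul_mul_assoc]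
    have hEbx : ∀ x : A, E * (b * x) = q • (E * x) := fun x => by
      rw [← mul_assoc, hb', smul_mul_assoc]
    have hbiE : bi * E = q⁻¹ • E := by
      have h1' : q • (bi * E) = E := by rw [← mul_smul_comm, ← ha', hbibx]
      calc bi * E = q⁻¹ • (q • (bi * E)) := by
            rw [smul_smul, inv_mul_cancel₀ hq, one_smul]
        _ = q⁻¹ • E := by rw [h1']
    have hbiEx : ∀ x : A, bi * (E * x) = q⁻¹ • (E * x) := fun x => by
      rw [← mul_assoc, hbiE, smul_mul_assoc]
    have hEaEx : ∀ x : A, E * (a * (E * x)) = z • (E * x) := fun x => by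
      calc E * (a * (E * x)) = (E * a * E) * x := by simp only [mul_assoc]
        _ = (z • E) * x := by rw [hcE]
        _ = z • (E * x) := by rw [smul_mul_assoc]
    have B1x : ∀ x : A, ai * (b * (a * x)) = b * (a * (bi * x)) := fun x => by
      conv_lhs => rw [show x = b * (bi * x) from (hbbix x).symm]
      rw [← braidx, haiax]
    have hABAx : ∀ y : A, a * (b * (a * (ai * (bi * (ai * y))))) = y := fun y => by
      rw [haaix, hbbix, haaix]
    have invbraidx : ∀ x : A, bi * (ai * (bi * x)) = ai * (bi * (ai * x)) := fun x => by
      conv_lhs => rw [show x = a * (b * (a * (ai * (bi * (ai * x))))) from (hABAx x).symm]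
      rw [braidx, hbibx, haiax, hbibx]
    have B2x : ∀ x : A, b * (ai * (bi * x)) = ai * (bi * (a * x)) := fun x => by
      conv_lhs => rw [show x = ai * (a * x) from (haiax x).symm]
      rw [← invbraidx, hbbix]
    have B2e : ai * (bi * a) = b * (ai * bi) := by
      have h := B2x 1
      rw [mul_one, mul_one] at h
      exact h.symm
    refine ⟨?_, ?_, ?_, ?_, ?_⟩
    · -- σ i * e i = q • e i
      rw [hdef, braidx, hbEx]
      simp only [mul_smul_comm]
    · -- e i * σ i = q • e i
      rw [hdef]
      simp only [mul_assoc]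
      rw [B2e, hEbx]
      simp only [mul_smul_comm]
    · -- e i * σ (i-1) * e i = z • e i
      intro h2i
      set c := σ (i - 1) with hC
      set ci := c - (q - q⁻¹) • (1 : A) with hCI
      have hqc := hσ2 (i - 1) (by omega) (by omega)
      have hccix := mulx c ci (inv_left _ _ hqc)
      have hbr2 := hbraid (i - 1) (by omega) (by omega)
      rw [show i - 1 + 1 = i from by omega] at hbr2
      -- hbr2 : c * a * c = a * c * a
      have braid2x : ∀ x : A, c * (a * (c * x)) = a * (c * (a * x)) := fun x => by
        calc c * (a * (c * x)) = (c * a * c) * x := by simp only [mul_assoc]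
          _ = (a * c * a) * x := by rw [hbr2]
          _ = a * (c * (a * x)) := by simp only [mul_assoc]
      have hcb : c * b = b * c :=
        hfarσσ (i - 1) (i + 1) (by omega) (by omega) (by omega) (by omega)
          (Or.inl (by omega))
      have hbicx : ∀ x : A, bi * (c * x) = c * (bi * x) :=
        commx bi c (comm_sub _ b c hcb.symm)
      have hcEc : c * E = E * c := hd' (i - 1) (by omega) (by omega)
      have hcEx' : ∀ x : A, E * (c * x) = c * (E * x) := commx E c hcEc.symm
      have hciEx : ∀ x : A, ci * (E * x) = E * (ci * x) :=
        commx ci E (comm_sub _ c E hcEc)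
      have hBx : ∀ x : A, ai * (c * (a * x)) = c * (a * (ci * x)) := fun x => by
        conv_lhs => rw [show x = c * (ci * x) from (hccix x).symm]
        rw [braid2x, haiax]
      rw [hdef]
      simp only [mul_assoc]
      rw [hbicx, hbibx, hBx, hcEx', hciEx, hEaEx, ← hciEx]
      simp only [mul_smul_comm]
      rw [hccix]
    · -- far commutation
      intro j hj1 hj2
      have hsa : σ j * a = a * σ j :=
        hfarσσ j i hj1 (by omega) h1 (by omega) (Or.inl (by omega))
      have hsb : σ j * b = b * σ j :=
        hfarσσ j (i + 1) hj1 (by omega) (by omega) (by omega) (Or.inl (by omega))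
      have hsE : σ j * E = E * σ j := hd' j hj1 (by omega)
      have hsax := commx (σ j) a hsa
      have hsbx := commx (σ j) b hsb
      have hsEx := commx (σ j) E hsE
      have hsaix := commx (σ j) ai (comm_sub _ a (σ j) hsa.symm).symm
      have hbis : bi * σ j = σ j * bi := comm_sub _ b (σ j) hsb.symm
      rw [hdef]
      simp only [mul_assoc]
      rw [hsbx, hsax, hsEx, hsaix, ← hbis]
    · -- e i * σ (i+1) * e i = z • e i
      intro _
      rw [hdef]
      simp only [mul_assoc]
      rw [hbibx, B1x, hEbx, hbiEx]
      simp only [mul_smul_comm, smul_smul]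
      rw [mul_inv_cancel₀ hq, one_smul, hEaEx]
      simp only [mul_smul_comm]
end
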